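/- Let n ≥ 1 and let X ⊆ S^{n-1} be a non-empty F_σ set (a countable union of closed sets). Then there exists a discrete set E ⊆ 𝔻ⁿ which is separated and well-approximated, with L_rad(E) ⊇ X and δ(E) = dim_H X; moreover every separated and well-approximated discrete E ⊆ 𝔻ⁿ with L_rad(E) ⊇ X satisfies δ(E) ≥ dim_H X. Consequently, dim_H X equals the minimum of δ(E) over all separated and well-approximated discrete E ⊆ 𝔻ⁿ with L_rad(E) ⊇ X. -/

import Mathlib

open Metric Set Filter
open scoped ENNReal NNReal

noncomputable section

/-- Points of `ℝⁿ` (Euclidean space). -/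
abbrev Pt (n : ℕ) := EuclideanSpace ℝ (Fin n)

/-- `E` is a discrete set: every point of `E` is isolated in `E`. -/
def IsDiscreteSet {n : ℕ} (E : Set (Pt n)) : Prop :=
  ∀ x ∈ E, ∃ r > 0, closedBall x r ∩ E = {x}

/-- The limit set `L(E) = cl(E) \ E`. -/
def limitSet {n : ℕ} (E : Set (Pt n)) : Set (Pt n) := closure E \ E

/-- `E ⊆ 𝔻ⁿ` is separated. -/
def SeparatedSet {n : ℕ} (E : Set (Pt n)) : Prop :=
  ∃ c₁ : ℝ, 0 < c₁ ∧ c₁ < 1 ∧ ∀ x ∈ E, closedBall x (c₁ * (1 - ‖x‖)) ∩ E = {x}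

/-- `E ⊆ 𝔻ⁿ` is well-approximated. -/
def WellApproximated {n : ℕ} (E : Set (Pt n)) : Prop :=
  ∃ c₂ : ℝ, 1 ≤ c₂ ∧ ∀ x ∈ E, ∃ z ∈ limitSet E, dist x z ≤ c₂ * (1 - ‖x‖)

/-- `E` is `α`-separated. -/
def AlphaSeparated {n : ℕ} (E : Set (Pt n)) (α : ℝ) : Prop :=
  ∃ c₁ : ℝ, 0 < c₁ ∧ ∀ x ∈ E, closedBall x (c₁ * (1 - ‖x‖) ^ α) ∩ E = {x}

/-- `E` is `β`-well-approximated. -/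
def BetaWellApproximated {n : ℕ} (E : Set (Pt n)) (β : ℝ) : Prop :=
  ∃ c₂ : ℝ, 1 ≤ c₂ ∧ ∀ x ∈ E, ∃ z ∈ limitSet E, dist x z ≤ c₂ * (1 - ‖x‖) ^ β

/-- The accumulation series `S_E(s) = ∑_{x ∈ E} (1 - |x|)^s` (valued in `ℝ≥0∞`). -/
def accSeries {n : ℕ} (E : Set (Pt n)) (s : ℝ) : ℝ≥0∞ :=
  ∑' x : E, ENNReal.ofReal ((1 - ‖(x : Pt n)‖) ^ s)

/-- The critical exponent `δ(E) = inf { s ≥ 0 : S_E(s) < ∞ }`, with `inf ∅ = ∞`. -/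
def critExp {n : ℕ} (E : Set (Pt n)) : ℝ≥0∞ :=
  ⨅ (s : ℝ≥0) (_ : accSeries E (s : ℝ) < ⊤), (s : ℝ≥0∞)

/-- The set of `c`-radial limit points of `E`. -/
def radialPoints {n : ℕ} (E : Set (Pt n)) (c : ℝ) : Set (Pt n) :=
  {z | ‖z‖ = 1 ∧ ∀ r > 0, ∃ x ∈ E,
    dist x z ≤ c * (1 - ‖x‖) ∧ c * (1 - ‖x‖) ≤ c * r}

/-- The radial limit set `L_rad(E) = ⋃_{c ≥ 1} L_c(E)`. -/
def radialLimitSet {n : ℕ} (E : Set (Pt n)) : Set (Pt n) :=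
  ⋃ c ∈ Ici (1 : ℝ), radialPoints E c

/-- The set of `(γ, c)`-radial limit points of `E`. -/
def gammaRadialPoints {n : ℕ} (E : Set (Pt n)) (γ c : ℝ) : Set (Pt n) :=
  {z | z ∈ limitSet E ∧ ∀ r > 0, ∃ x ∈ E,
    dist x z ≤ c * (1 - ‖x‖) ^ γ ∧ c * (1 - ‖x‖) ^ γ ≤ c * r ^ γ}

/-- The `γ`-radial limit set `L_rad^γ(E) = ⋃_{c ≥ 1} L_c^γ(E)`. -/
def gammaRadialLimitSet {n : ℕ} (E : Set (Pt n)) (γ : ℝ) : Set (Pt n) :=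
  ⋃ c ∈ Ici (1 : ℝ), gammaRadialPoints E γ c

/-- The packing number `N_δ(F)`: the maximal cardinality of a packing of `F` by
pairwise disjoint closed balls of radius `δ` centred in `F`. -/
def packingNumber {n : ℕ} (F : Set (Pt n)) (δ : ℝ) : ℕ∞ :=
  ⨆ (Z : Finset (Pt n)) (_ : ↑Z ⊆ F)
    (_ : (Z : Set (Pt n)).PairwiseDisjoint fun x => closedBall x δ), (Z.card : ℕ∞)

/-- The upper box dimension `limsup_{δ → 0⁺} log N_δ(F) / (-log δ)`. -/
def upperBoxDim {n : ℕ} (F : Set (Pt n)) : ℝ≥0∞ :=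
  limsup (fun δ : ℝ =>
    ENNReal.ofReal (Real.log ((packingNumber F δ).toNat : ℝ) / (-Real.log δ)))
    (nhdsWithin 0 (Ioi 0))

/-- The lower box dimension `liminf_{δ → 0⁺} log N_δ(F) / (-log δ)`. -/
def lowerBoxDim {n : ℕ} (F : Set (Pt n)) : ℝ≥0∞ :=
  liminf (fun δ : ℝ =>
    ENNReal.ofReal (Real.log ((packingNumber F δ).toNat : ℝ) / (-Real.log δ)))
    (nhdsWithin 0 (Ioi 0))

/-!
Lower bound: at every scale `2⁻ᵐ`, the balls `B(x, c (1 - |x|))` with `x ∈ E`, `1 - |x| ≤ 2⁻ᵐ`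
cover `L_c(E)`, so `μH[s] (L_c(E)) ≤ (2c)^s S_E(s)`; hence `dim_H L_rad(E) ≤ δ(E)`.

Upper bound: write `X = ⋃ F_k` with `F_k` compact. For `s > dim_H X` every `F_k` is `μH[s]`-null,
so it has finite covers by balls `B(z, 16 r)`, `z ∈ F_k`, with `∑ r^s` arbitrarily small and
each centre `z` farther than `4 r` from the others (Vitali). The points `(1 - r) z` form `E`.
Choosing the covers layer by layer, each layer's radii at most a quarter of the previous layer's,
makes `E` separated; the centres `z ∈ X ⊆ L(E)` make it well approximated; the small sums make
`S_E(s)` finite.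
-/

open MeasureTheory Topology

section RadialLimits

variable {n : ℕ} {E : Set (Pt n)}

lemma mem_radialPoints_iff {c : ℝ} (hc : 0 < c) {z : Pt n} :
    z ∈ radialPoints E c ↔
      ‖z‖ = 1 ∧ ∀ r > 0, ∃ x ∈ E, dist x z ≤ c * (1 - ‖x‖) ∧ 1 - ‖x‖ ≤ r := by
  simp only [radialPoints, mem_ofPred_eq, mul_le_mul_iff_right₀ hc]

lemma radialPoints_mono {c c' : ℝ} (hc : 0 < c) (hcc' : c ≤ c') :
    radialPoints E c ⊆ radialPoints E c' := by
  intro z hz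
  rw [mem_radialPoints_iff hc] at hz
  rw [mem_radialPoints_iff (hc.trans_le hcc')]
  refine ⟨hz.1, fun r hr => ?_⟩
  obtain ⟨x, hxE, hxz, hxr⟩ := hz.2 r hr
  have hx : 0 ≤ 1 - ‖x‖ := nonneg_of_mul_nonneg_right (dist_nonneg.trans hxz) hc
  exact ⟨x, hxE, hxz.trans (mul_le_mul_of_nonneg_right hcc' hx), hxr⟩

lemma radialLimitSet_subset_iUnion_nat (E : Set (Pt n)) :
    radialLimitSet E ⊆ ⋃ k : ℕ, radialPoints E (k + 1) := by
  simp only [radialLimitSet, iUnion_subset_iff, mem_Ici]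
  intro c hc
  have hc' : c ≤ (⌈c⌉₊ : ℝ) + 1 := by linarith [Nat.le_ceil c]
  exact (radialPoints_mono (by linarith) hc').trans (subset_iUnion_of_subset ⌈c⌉₊ subset_rfl)

lemma radialPoints_subset_radialLimitSet {c : ℝ} (hc : 1 ≤ c) :
    radialPoints E c ⊆ radialLimitSet E :=
  subset_biUnion_of_mem (u := radialPoints E) (mem_Ici.2 hc)

lemma radialPoints_subset_closure {c : ℝ} (hc : 0 ≤ c) : radialPoints E c ⊆ closure E := by
  rintro z ⟨-, hz⟩
  refine Metric.mem_closure_iff.2 fun ε hε => ?_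
  obtain ⟨x, hxE, hxz, hxr⟩ := hz (ε / (c + 1)) (by positivity)
  refine ⟨x, hxE, ?_⟩
  have : c * (ε / (c + 1)) < ε := by
    rw [mul_div_assoc', div_lt_iff₀ (by positivity)]
    nlinarith
  rw [dist_comm]
  linarith

lemma radialLimitSet_subset_limitSet (hE : E ⊆ ball 0 1) : radialLimitSet E ⊆ limitSet E := by
  simp only [radialLimitSet, iUnion_subset_iff, mem_Ici]
  intro c hc z hz
  refine ⟨radialPoints_subset_closure (by linarith) hz, fun hzE => ?_⟩
  have := mem_ball_zero_iff.1 (hE hzE)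
  linarith [hz.1]

end RadialLimits

section LowerBound

variable {n : ℕ} {E : Set (Pt n)}

lemma countable_of_accSeries_ne_top (hE : E ⊆ ball 0 1) {s : ℝ} (hs : accSeries E s ≠ ⊤) :
    E.Countable := by
  have hsupp := Summable.countable_support_ennreal hs
  have : Function.support (fun x : E => ENNReal.ofReal ((1 - ‖(x : Pt n)‖) ^ s)) = univ := by
    refine eq_univ_of_forall fun x => ?_
    have := mem_ball_zero_iff.1 (hE x.2)
    simpa using Real.rpow_pos_of_pos (by linarith) s
  rw [this, countable_univ_iff] at hsupp
  exact countable_coe_iff.1 hsupp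

lemma ediam_closedBall_le_ofReal {α : Type*} [PseudoMetricSpace α] (x : α) {ρ : ℝ} (hρ : 0 ≤ ρ) :
    ediam (closedBall x ρ) ≤ ENNReal.ofReal (2 * ρ) := by
  rw [← closedEBall_ofReal hρ, ENNReal.ofReal_mul zero_le_two, ENNReal.ofReal_ofNat]
  exact ediam_closedEBall_le

lemma radialPoints_subset_iUnion_closedBall {c r : ℝ} (hc : 0 < c) (hr : 0 < r) :
    radialPoints E c ⊆
      ⋃ x : {x | x ∈ E ∧ 1 - ‖x‖ ≤ r}, closedBall (x : Pt n) (c * (1 - ‖(x : Pt n)‖)) := by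
  intro z hz
  obtain ⟨x, hxE, hxz, hxr⟩ := ((mem_radialPoints_iff hc).1 hz).2 r hr
  exact mem_iUnion.2 ⟨⟨x, hxE, hxr⟩, by rwa [mem_closedBall, dist_comm]⟩

lemma hausdorffMeasure_radialPoints_le (hE : E ⊆ ball 0 1) {s c : ℝ} (hs : 0 ≤ s) (hc : 0 < c)
    (hS : accSeries E s ≠ ⊤) :
    μH[s] (radialPoints E c) ≤ ENNReal.ofReal ((2 * c) ^ s) * accSeries E s := by
  have hgap : ∀ x ∈ E, 0 < 1 - ‖x‖ := fun x hx => by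
    linarith [mem_ball_zero_iff.1 (hE hx)]
  let J : ℕ → Set (Pt n) := fun m => {x | x ∈ E ∧ 1 - ‖x‖ ≤ 2⁻¹ ^ m}
  have hJE : ∀ m, J m ⊆ E := fun m x hx => hx.1
  have : ∀ m, Countable (J m) := fun m =>
    ((countable_of_accSeries_ne_top hE hS).mono (hJE m)).to_subtype
  let f : Pt n → ℝ≥0∞ := fun x => ENNReal.ofReal ((2 * c) ^ s) * ENNReal.ofReal ((1 - ‖x‖) ^ s)
  have hterm : ∀ x ∈ E, ediam (closedBall x (c * (1 - ‖x‖))) ^ s ≤ f x := fun x hx => by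
    have hx := hgap x hx
    calc ediam (closedBall x (c * (1 - ‖x‖))) ^ s ≤ ENNReal.ofReal (2 * (c * (1 - ‖x‖))) ^ s :=
          ENNReal.rpow_le_rpow (ediam_closedBall_le_ofReal x (by positivity)) hs
      _ = f x := by
          dsimp only [f]
          rw [ENNReal.ofReal_rpow_of_nonneg (by positivity) hs,
            ← ENNReal.ofReal_mul (by positivity), ← Real.mul_rpow (by positivity) hx.le, mul_assoc]
  have hdiam : ∀ m (x : J m),
      ediam (closedBall (x : Pt n) (c * (1 - ‖(x : Pt n)‖))) ≤ ENNReal.ofReal (2 * c * 2⁻¹ ^ m) :=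
    fun m x => by
      have hx := hgap x x.2.1
      refine (ediam_closedBall_le_ofReal _ (by positivity)).trans (ENNReal.ofReal_le_ofReal ?_)
      rw [← mul_assoc]
      exact mul_le_mul_of_nonneg_left x.2.2 (by positivity)
  have hr : Tendsto (fun m : ℕ => ENNReal.ofReal (2 * c * 2⁻¹ ^ m)) atTop (𝓝 0) := by
    rw [← ENNReal.ofReal_zero, ← mul_zero (2 * c)]
    exact ENNReal.tendsto_ofReal
      ((tendsto_pow_atTop_nhds_zero_of_lt_one (by norm_num) (by norm_num)).const_mul _)
  refine (Measure.hausdorffMeasure_le_liminf_tsum s _ _ hr _ (.of_forall hdiam)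
    (.of_forall fun m => radialPoints_subset_iUnion_closedBall hc (by positivity))).trans
    (liminf_le_of_frequently_le' (.of_forall fun m => ?_))
  calc ∑' x : J m, ediam (closedBall (x : Pt n) (c * (1 - ‖(x : Pt n)‖))) ^ s
      ≤ ∑' x : J m, f x := ENNReal.tsum_le_tsum fun x => hterm x x.2.1
    _ ≤ ∑' x : E, f x := ENNReal.tsum_mono_subtype f (hJE m)
    _ = _ := ENNReal.tsum_mul_left

end LowerBound

section CriticalExponent

variable {n : ℕ} {E : Set (Pt n)}

lemma dimH_radialLimitSet_le_critExp (hE : E ⊆ ball 0 1) : dimH (radialLimitSet E) ≤ critExp E := by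
  refine (dimH_mono (radialLimitSet_subset_iUnion_nat E)).trans ?_
  rw [dimH_iUnion]
  refine iSup_le fun k => le_iInf₂ fun s hs => dimH_le_of_hausdorffMeasure_ne_top ?_
  exact ne_top_of_le_ne_top (ENNReal.mul_ne_top ENNReal.ofReal_ne_top hs.ne)
    (hausdorffMeasure_radialPoints_le hE s.2 (by positivity) hs.ne)

lemma critExp_le_of_accSeries_lt_top {d : ℝ≥0∞} (h : ∀ s : ℝ≥0, d < s → accSeries E s < ⊤) :
    critExp E ≤ d := by
  by_contra! hlt
  obtain ⟨s, hds, hsc⟩ := ENNReal.lt_iff_exists_nnreal_btwn.1 hlt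
  exact hsc.not_ge (iInf₂_le s (h s hds))

lemma SeparatedSet.isDiscreteSet (hsep : SeparatedSet E) (hE : E ⊆ ball 0 1) : IsDiscreteSet E := by
  obtain ⟨c₁, hc₁, -, hc⟩ := hsep
  intro x hx
  have := mem_ball_zero_iff.1 (hE hx)
  exact ⟨c₁ * (1 - ‖x‖), by nlinarith, hc x hx⟩

end CriticalExponent

section InwardPoints

variable {V : Type*} [NormedAddCommGroup V] [NormedSpace ℝ V]

def BallSeparated {α : Type*} [PseudoMetricSpace α] (p q : α × ℝ) : Prop :=
  (4 * p.2 < dist p.1 q.1 ∧ 4 * q.2 < dist p.1 q.1) ∨ 4 * q.2 ≤ p.2 ∨ 4 * p.2 ≤ q.2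

def inwardPoint (p : V × ℝ) : V := (1 - p.2) • p.1

lemma norm_inwardPoint {p : V × ℝ} (h1 : ‖p.1‖ = 1) (h : p.2 ≤ 1) :
    ‖inwardPoint p‖ = 1 - p.2 := by
  rw [inwardPoint, norm_smul, h1, mul_one, Real.norm_of_nonneg (by linarith)]

lemma dist_inwardPoint {p : V × ℝ} (h1 : ‖p.1‖ = 1) (h : 0 ≤ p.2) :
    dist (inwardPoint p) p.1 = p.2 := by
  rw [inwardPoint, dist_eq_norm, sub_smul, one_smul, sub_sub_cancel_left, norm_neg, norm_smul, h1,
    mul_one, Real.norm_of_nonneg h]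

lemma lt_dist_inwardPoint {p q : V × ℝ} (hp1 : ‖p.1‖ = 1) (hq1 : ‖q.1‖ = 1)
    (hp : 0 < p.2) (hp' : p.2 ≤ 1) (hq : 0 < q.2) (hq' : q.2 ≤ 1)
    (hpq : BallSeparated p q) :
    p.2 / 2 < dist (inwardPoint p) (inwardPoint q) := by
  have hnorm : |q.2 - p.2| ≤ dist (inwardPoint p) (inwardPoint q) := by
    simpa [norm_inwardPoint, hp1, hq1, hp', hq', dist_eq_norm] using
      abs_norm_sub_norm_le (inwardPoint p) (inwardPoint q)
  rcases hpq with ⟨hp4, hq4⟩ | h | h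
  · have := dist_triangle4 p.1 (inwardPoint p) (inwardPoint q) q.1
    rw [dist_comm p.1 (inwardPoint p), dist_inwardPoint hp1 hp.le,
      dist_inwardPoint hq1 hq.le] at this
    linarith
  · linarith [neg_abs_le (q.2 - p.2)]
  · linarith [le_abs_self (q.2 - p.2)]

end InwardPoints

section InwardSets

variable {n : ℕ}

lemma image_inwardPoint_subset_ball {P : Set (Pt n × ℝ)}
    (hP : ∀ p ∈ P, ‖p.1‖ = 1 ∧ 0 < p.2 ∧ p.2 ≤ 1) : inwardPoint '' P ⊆ ball 0 1 := by
  rintro _ ⟨p, hp, rfl⟩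
  obtain ⟨hp1, hp2, hp3⟩ := hP p hp
  rw [mem_ball_zero_iff, norm_inwardPoint hp1 hp3]
  linarith

lemma separatedSet_image_inwardPoint {P : Set (Pt n × ℝ)}
    (hP : ∀ p ∈ P, ‖p.1‖ = 1 ∧ 0 < p.2 ∧ p.2 ≤ 1)
    (hsep : P.Pairwise BallSeparated) :
    SeparatedSet (inwardPoint '' P) := by
  refine ⟨1 / 2, by norm_num, by norm_num, ?_⟩
  rintro _ ⟨p, hp, rfl⟩
  obtain ⟨hp1, hp2, hp3⟩ := hP p hp
  rw [norm_inwardPoint hp1 hp3, sub_sub_cancel]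
  refine Subset.antisymm (fun y ⟨hy, hyP⟩ => ?_)
    (singleton_subset_iff.2 ⟨mem_closedBall_self (by positivity), mem_image_of_mem _ hp⟩)
  obtain ⟨q, hq, rfl⟩ := hyP
  obtain ⟨hq1, hq2, hq3⟩ := hP q hq
  by_cases hpq : p = q
  · rw [hpq, mem_singleton_iff]
  rw [mem_closedBall, dist_comm, one_div_mul_eq_div] at hy
  exact absurd hy (lt_dist_inwardPoint hp1 hq1 hp2 hp3 hq2 hq3 (hsep hp hq hpq)).not_ge

lemma accSeries_image_inwardPoint_le {C : ℕ → Finset (Pt n × ℝ)}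
    (hC : ∀ t, ∀ p ∈ C t, ‖p.1‖ = 1 ∧ p.2 ≤ 1) (s : ℝ) :
    accSeries (inwardPoint '' ⋃ t, (C t : Set (Pt n × ℝ))) s ≤
      ∑' t, ∑ p ∈ C t, ENNReal.ofReal (p.2 ^ s) := by
  rw [accSeries, image_iUnion]
  refine (ENNReal.tsum_iUnion_le_tsum (fun x : Pt n => ENNReal.ofReal ((1 - ‖x‖) ^ s)) _).trans
    (ENNReal.tsum_le_tsum fun t => ?_)
  calc ∑' x : inwardPoint '' (C t : Set (Pt n × ℝ)), ENNReal.ofReal ((1 - ‖(x : Pt n)‖) ^ s)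
      ≤ ∑' p : (C t : Set (Pt n × ℝ)), ENNReal.ofReal ((1 - ‖inwardPoint (p : Pt n × ℝ)‖) ^ s) :=
        ENNReal.tsum_le_tsum_comp_of_surjective
          (imageFactorization_surjective (f := inwardPoint) (s := (C t : Set (Pt n × ℝ))))
          (fun x => ENNReal.ofReal ((1 - ‖(x : Pt n)‖) ^ s))
    _ = ∑ p ∈ C t, ENNReal.ofReal ((1 - ‖inwardPoint p‖) ^ s) :=
        Finset.tsum_subtype (C t) fun p => ENNReal.ofReal ((1 - ‖inwardPoint p‖) ^ s)
    _ = _ := Finset.sum_congr rfl fun p hp => by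
        rw [norm_inwardPoint (hC t p hp).1 (hC t p hp).2, sub_sub_cancel]

end InwardSets

lemma exists_cover_tsum_ediam_rpow_lt {α : Type*} [EMetricSpace α] [MeasurableSpace α]
    [BorelSpace α] {F : Set α} {s : ℝ} (h : μH[s] F = 0) {r ε : ℝ≥0∞} (hr : 0 < r) (hε : 0 < ε) :
    ∃ t : ℕ → Set α, F ⊆ ⋃ i, t i ∧ (∀ i, ediam (t i) ≤ r) ∧
      ∑' i, ⨆ _ : (t i).Nonempty, ediam (t i) ^ s < ε := by
  have : (⨅ (t : ℕ → Set α) (_ : F ⊆ ⋃ i, t i) (_ : ∀ i, ediam (t i) ≤ r),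
      ∑' i, ⨆ _ : (t i).Nonempty, ediam (t i) ^ s) < ε := by
    refine lt_of_le_of_lt ?_ hε
    rw [← h, Measure.hausdorffMeasure_apply]
    exact le_iSup₂_of_le r hr le_rfl
  simpa only [iInf_lt_iff, exists_prop] using this

lemma exists_gt_rpow_lt_add {a b e s : ℝ} (hab : a < b) (he : 0 < e) (hs : 0 ≤ s) :
    ∃ R, a < R ∧ R < b ∧ R ^ s < a ^ s + e := by
  have hcont : ∀ᶠ x in 𝓝[>] a, x ^ s < a ^ s + e :=
    nhdsWithin_le_nhds <| (Real.continuousAt_rpow_const a s (Or.inr hs)).eventually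
      (gt_mem_nhds (lt_add_of_pos_right _ he))
  obtain ⟨R, hR, hRab⟩ := (hcont.and (Ioo_mem_nhdsGT hab)).exists
  exact ⟨R, hRab.1, hRab.2, hR⟩

lemma exists_ball_cover_of_hausdorffMeasure_eq_zero {α : Type*} [MetricSpace α]
    [MeasurableSpace α] [BorelSpace α] {F : Set α} {s : ℝ} (hs : 0 ≤ s) (h : μH[s] F = 0)
    {δ : ℝ} (hδ : 0 < δ) {ε : ℝ≥0∞} (hε : 0 < ε) :
    ∃ S : Set (α × ℝ), (∀ p ∈ S, p.1 ∈ F ∧ 0 < p.2 ∧ p.2 ≤ δ) ∧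
      F ⊆ ⋃ p ∈ S, ball p.1 p.2 ∧ ∑' p : S, ENNReal.ofReal ((p : α × ℝ).2 ^ s) < ε := by
  obtain ⟨η, hη, hηε⟩ := ENNReal.exists_pos_sum_of_countable (ENNReal.half_pos hε.ne').ne' ℕ
  obtain ⟨t, hFt, htδ, htε⟩ := exists_cover_tsum_ediam_rpow_lt h
    (ENNReal.ofReal_pos.2 (half_pos hδ)) (ENNReal.half_pos hε.ne')
  let d : ℕ → ℝ := fun i => (ediam (t i)).toReal
  have hdt : ∀ i, ENNReal.ofReal (d i) = ediam (t i) := fun i =>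
    ENNReal.ofReal_toReal (ne_top_of_le_ne_top ENNReal.ofReal_ne_top (htδ i))
  have hdδ : ∀ i, d i < δ := fun i => by
    linarith [ENNReal.toReal_le_of_le_ofReal (half_pos hδ).le (htδ i)]
  choose R hdR hRδ hRs using fun i => exists_gt_rpow_lt_add (hdδ i) (NNReal.coe_pos.2 (hη i)) hs
  have hterm : ∀ i, ENNReal.ofReal (R i ^ s) ≤ ediam (t i) ^ s + η i := fun i => calc
    ENNReal.ofReal (R i ^ s) ≤ ENNReal.ofReal (d i ^ s + η i) := ENNReal.ofReal_le_ofReal (hRs i).le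
    _ = ediam (t i) ^ s + η i := by
      rw [ENNReal.ofReal_add (by positivity) (η i).coe_nonneg, ENNReal.ofReal_coe_nnreal,
        ← ENNReal.ofReal_rpow_of_nonneg ENNReal.toReal_nonneg hs, hdt]
  let ι := {i // (t i ∩ F).Nonempty}
  let cover : ι → α × ℝ := fun i => (i.2.some, R i)
  refine ⟨range cover, ?_, fun w hw => ?_, ?_⟩
  · rintro _ ⟨i, rfl⟩
    exact ⟨i.2.some_mem.2, ENNReal.toReal_nonneg.trans_lt (hdR i), (hRδ i).le⟩
  · obtain ⟨i, hi⟩ := mem_iUnion.1 (hFt hw)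
    let j : ι := ⟨i, w, hi, hw⟩
    refine mem_biUnion (mem_range_self j) (lt_of_le_of_lt ?_ (hdR i))
    rw [dist_edist]
    exact ENNReal.toReal_mono (hdt i ▸ ENNReal.ofReal_ne_top)
      (edist_le_ediam_of_mem hi j.2.some_mem.1)
  calc ∑' p : range cover, ENNReal.ofReal ((p : α × ℝ).2 ^ s)
      ≤ ∑' i : ι, ENNReal.ofReal (R i ^ s) :=
        ENNReal.tsum_le_tsum_comp_of_surjective rangeFactorization_surjective
          (fun p : range cover => ENNReal.ofReal ((p : α × ℝ).2 ^ s))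
    _ ≤ ∑' i : ι, ((⨆ _ : (t i).Nonempty, ediam (t i) ^ s) + η i) :=
        ENNReal.tsum_le_tsum fun i => (hterm i).trans (add_le_add_left
          (le_iSup (fun _ : (t i).Nonempty => ediam (t i) ^ s) (i.2.mono inter_subset_left)) _)
    _ ≤ ∑' i, ((⨆ _ : (t i).Nonempty, ediam (t i) ^ s) + η i) :=
        ENNReal.tsum_comp_le_tsum_of_injective Subtype.val_injective
          (fun i => (⨆ _ : (t i).Nonempty, ediam (t i) ^ s) + η i)
    _ < ε / 2 + ε / 2 := by rw [ENNReal.tsum_add]; exact ENNReal.add_lt_add htε hηε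
    _ = ε := ENNReal.add_halves ε

lemma exists_finite_ball_cover_of_hausdorffMeasure_eq_zero {α : Type*} [MetricSpace α]
    [MeasurableSpace α] [BorelSpace α] {F : Set α} (hF : IsCompact F) {s : ℝ} (hs : 0 ≤ s)
    (h : μH[s] F = 0) {δ : ℝ} (hδ : 0 < δ) {ε : ℝ≥0∞} (hε : 0 < ε) :
    ∃ S : Finset (α × ℝ), (∀ p ∈ S, p.1 ∈ F ∧ 0 < p.2 ∧ p.2 ≤ δ) ∧
      F ⊆ ⋃ p ∈ S, ball p.1 p.2 ∧ ∑ p ∈ S, ENNReal.ofReal (p.2 ^ s) < ε := by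
  classical
  obtain ⟨S, hSF, hScov, hSε⟩ := exists_ball_cover_of_hausdorffMeasure_eq_zero hs h hδ hε
  obtain ⟨T, hT⟩ := hF.elim_finite_subcover (fun p : S => ball (p : α × ℝ).1 (p : α × ℝ).2)
    (fun _ => isOpen_ball) (by rwa [biUnion_eq_iUnion] at hScov)
  refine ⟨T.image Subtype.val, ?_, ?_, ?_⟩
  · simp only [Finset.mem_image]
    rintro _ ⟨p, -, rfl⟩
    exact hSF p p.2
  · rwa [Finset.set_biUnion_finset_image]
  calc ∑ p ∈ T.image Subtype.val, ENNReal.ofReal (p.2 ^ s)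
      = ∑ p ∈ T, ENNReal.ofReal ((p : α × ℝ).2 ^ s) :=
        Finset.sum_image Subtype.val_injective.injOn
    _ ≤ ∑' p : S, ENNReal.ofReal ((p : α × ℝ).2 ^ s) := ENNReal.sum_le_tsum _
    _ < ε := hSε

lemma exists_disjoint_subcover_of_ball_cover {α : Type*} [PseudoMetricSpace α] {F : Set α}
    {S : Finset (α × ℝ)}
    (hS0 : ∀ p ∈ S, 0 ≤ p.2) (hS : F ⊆ ⋃ p ∈ S, ball p.1 p.2) :
    ∃ S' ⊆ S, (∀ p ∈ S', ∀ q ∈ S', p ≠ q → p.2 < dist p.1 q.1) ∧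
      F ⊆ ⋃ p ∈ S', closedBall p.1 (4 * p.2) := by
  classical
  obtain ⟨R, hR⟩ := (S.image Prod.snd).bddAbove
  obtain ⟨u, huS, hdisj, hcov⟩ := Vitali.exists_disjoint_subfamily_covering_enlargement_closedBall
    (S : Set (α × ℝ)) Prod.fst Prod.snd R (fun p hp => hR (Finset.mem_image_of_mem _ hp)) 4
    (by norm_num)
  refine ⟨S.filter (· ∈ u), Finset.filter_subset _ _, fun p hp q hq hpq => ?_, fun w hw => ?_⟩
  · rw [Finset.mem_filter] at hp hq
    by_contra! hle
    exact disjoint_left.1 (hdisj hp.2 hq.2 hpq) (mem_closedBall.2 (by rwa [dist_comm]))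
      (mem_closedBall_self (hS0 q hq.1))
  · obtain ⟨p, hpS, hwp⟩ := mem_iUnion₂.1 (hS hw)
    obtain ⟨b, hbu, hb⟩ := hcov p hpS
    exact mem_iUnion₂.2 ⟨b, Finset.mem_filter.2 ⟨huS hbu, hbu⟩, hb (ball_subset_closedBall hwp)⟩

theorem exists_separated_cover_of_hausdorffMeasure_eq_zero {α : Type*} [MetricSpace α]
    [MeasurableSpace α] [BorelSpace α]
    {F : Set α} (hF : IsCompact F) {s : ℝ} (hs : 0 ≤ s) (h : μH[s] F = 0) {δ : ℝ} (hδ : 0 < δ)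
    {ε : ℝ≥0∞} (hε : 0 < ε) :
    ∃ S : Finset (α × ℝ), (∀ p ∈ S, p.1 ∈ F ∧ 0 < p.2 ∧ p.2 ≤ δ) ∧
      (∀ p ∈ S, ∀ q ∈ S, p ≠ q → 4 * p.2 < dist p.1 q.1) ∧
      F ⊆ ⋃ p ∈ S, closedBall p.1 (16 * p.2) ∧ ∑ p ∈ S, ENNReal.ofReal (p.2 ^ s) ≤ ε := by
  classical
  obtain ⟨S, hSF, hScov, hSε⟩ :=
    exists_finite_ball_cover_of_hausdorffMeasure_eq_zero hF hs h hδ hε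
  obtain ⟨S', hS'S, hsep, hcov⟩ :=
    exists_disjoint_subcover_of_ball_cover (fun p hp => (hSF p hp).2.1.le) hScov
  refine ⟨S'.image fun p => (p.1, p.2 / 4), ?_, ?_, ?_, ?_⟩
  · simp only [Finset.mem_image]
    rintro _ ⟨p, hp, rfl⟩
    obtain ⟨hpF, hp0, hpδ⟩ := hSF p (hS'S hp)
    exact ⟨hpF, by positivity, by linarith⟩
  · simp only [Finset.mem_image]
    rintro _ ⟨p, hp, rfl⟩ _ ⟨q, hq, rfl⟩ hpq
    have := hsep p hp q hq (by rintro rfl; exact hpq rfl)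
    dsimp only
    linarith
  · rw [Finset.set_biUnion_finset_image]
    convert hcov using 4 with p
    rw [show 16 * (p.2 / 4) = 4 * p.2 by ring]
  calc ∑ p ∈ S'.image (fun p => (p.1, p.2 / 4)), ENNReal.ofReal (p.2 ^ s)
      ≤ ∑ p ∈ S', ENNReal.ofReal ((p.2 / 4) ^ s) :=
        Finset.sum_image_le_of_nonneg fun _ _ => zero_le
    _ ≤ ∑ p ∈ S', ENNReal.ofReal (p.2 ^ s) := Finset.sum_le_sum fun p hp => by
        have := (hSF p (hS'S hp)).2.1
        exact ENNReal.ofReal_le_ofReal (Real.rpow_le_rpow (by positivity) (by linarith) hs)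
    _ ≤ ∑ p ∈ S, ENNReal.ofReal (p.2 ^ s) := Finset.sum_le_sum_of_subset hS'S
    _ ≤ ε := hSε.le

section Layers

lemma tsum_ne_top_of_eventually_le {a b : ℕ → ℝ≥0∞} (ha : ∀ t, a t ≠ ⊤) (hb : ∑' t, b t ≠ ⊤)
    (hab : ∀ᶠ t in atTop, a t ≤ b t) : ∑' t, a t ≠ ⊤ := by
  obtain ⟨T, hT⟩ := eventually_atTop.1 hab
  lift a to ℕ → ℝ≥0 using ha
  lift b to ℕ → ℝ≥0 using ENNReal.ne_top_of_tsum_ne_top hb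
  rw [ENNReal.tsum_coe_ne_top_iff_summable] at hb ⊢
  refine (NNReal.summable_nat_add_iff T).1 (NNReal.summable_of_le (fun t => ?_)
    ((NNReal.summable_nat_add_iff T).2 hb))
  exact ENNReal.coe_le_coe.1 (hT _ (Nat.le_add_left T t))

lemma exists_scales {α : Type*} (cov : ℕ → ℝ → Finset (α × ℝ))
    (hcov : ∀ t δ, 0 < δ → ∀ p ∈ cov t δ, 0 < p.2) :
    ∃ δ : ℕ → ℝ, (∀ t, 0 < δ t) ∧ (∀ t, δ t ≤ 2⁻¹ ^ (t + 1)) ∧ Antitone δ ∧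
      ∀ t, ∀ p ∈ cov t (δ t), 4 * δ (t + 1) ≤ p.2 := by
  let δ : ℕ → ℝ := fun t =>
    Nat.rec 2⁻¹ (fun t d => (cov t d).fold min (d / 2) (fun p => p.2 / 4)) t
  have hsucc : ∀ t, δ (t + 1) = (cov t (δ t)).fold min (δ t / 2) (fun p => p.2 / 4) :=
    fun t => rfl
  have hpos : ∀ t, 0 < δ t := fun t => by
    induction t with
    | zero => norm_num [δ]
    | succ t ih =>
      rw [hsucc, Finset.lt_fold_min]
      exact ⟨by positivity, fun p hp => by have := hcov t _ ih p hp; positivity⟩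
  have hhalf : ∀ t, δ (t + 1) ≤ δ t / 2 := fun t => by
    rw [hsucc, Finset.fold_min_le]
    exact Or.inl le_rfl
  refine ⟨δ, hpos, fun t => ?_,
    antitone_nat_of_succ_le fun t => (hhalf t).trans (by linarith [hpos t]), fun t p hp => ?_⟩
  · induction t with
    | zero => norm_num [δ]
    | succ t ih => rw [pow_succ]; linarith [hhalf t]
  · have : δ (t + 1) ≤ p.2 / 4 := by
      rw [hsucc, Finset.fold_min_le]
      exact Or.inr ⟨p, hp, le_rfl⟩
    linarith

lemma pairwise_ballSeparated_iUnion {α : Type*} [PseudoMetricSpace α] {C : ℕ → Finset (α × ℝ)}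
    {δ : ℕ → ℝ} (hδ : Antitone δ) (hle : ∀ t, ∀ p ∈ C t, p.2 ≤ δ t)
    (hgap : ∀ t, ∀ p ∈ C t, 4 * δ (t + 1) ≤ p.2)
    (hsep : ∀ t, ∀ p ∈ C t, ∀ q ∈ C t, p ≠ q → 4 * p.2 < dist p.1 q.1) :
    (⋃ t, (C t : Set (α × ℝ))).Pairwise BallSeparated := by
  simp only [Set.Pairwise, mem_iUnion, Finset.mem_coe, BallSeparated]
  rintro p ⟨t, hp⟩ q ⟨t', hq⟩ hpq
  rcases lt_trichotomy t t' with htt' | rfl | htt'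
  · exact Or.inr (Or.inl (by linarith [hle t' q hq, hδ (Nat.succ_le_of_lt htt'), hgap t p hp]))
  · exact Or.inl ⟨hsep t p hp q hq hpq, dist_comm p.1 q.1 ▸ hsep t q hq p hp hpq.symm⟩
  · exact Or.inr (Or.inr (by linarith [hle t p hp, hδ (Nat.succ_le_of_lt htt'), hgap t' q hq]))

variable {n : ℕ} {C : ℕ → Finset (Pt n × ℝ)}

lemma frequently_atTop_unpair_fst_eq (k : ℕ) : ∃ᶠ t in atTop, (Nat.unpair t).1 = k :=
  frequently_atTop.2 fun N => ⟨Nat.pair k N, Nat.right_le_pair k N, by rw [Nat.unpair_pair]⟩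

lemma mem_radialPoints_of_frequently (hC : ∀ t, ∀ p ∈ C t, ‖p.1‖ = 1 ∧ 0 ≤ p.2 ∧ p.2 ≤ 1)
    {ρ : ℕ → ℝ} (hρ : Tendsto ρ atTop (𝓝 0)) (hCρ : ∀ t, ∀ p ∈ C t, p.2 ≤ ρ t) {z : Pt n}
    (hz : ‖z‖ = 1) (hfreq : ∃ᶠ t in atTop, z ∈ ⋃ p ∈ C t, closedBall p.1 (16 * p.2)) :
    z ∈ radialPoints (inwardPoint '' ⋃ t, (C t : Set (Pt n × ℝ))) 17 := by
  refine (mem_radialPoints_iff (by norm_num)).2 ⟨hz, fun r hr => ?_⟩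
  obtain ⟨t, hzt, hρt⟩ := (hfreq.and_eventually (hρ.eventually (ge_mem_nhds hr))).exists
  obtain ⟨p, hp, hzp⟩ := mem_iUnion₂.1 hzt
  obtain ⟨hp1, hp0, hp2⟩ := hC t p hp
  refine ⟨inwardPoint p, mem_image_of_mem _ (mem_iUnion.2 ⟨t, hp⟩), ?_, ?_⟩
  · rw [norm_inwardPoint hp1 hp2, sub_sub_cancel]
    linarith [dist_triangle (inwardPoint p) p.1 z, dist_inwardPoint hp1 hp0, mem_closedBall'.1 hzp]
  · rw [norm_inwardPoint hp1 hp2, sub_sub_cancel]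
    exact (hCρ t p hp).trans hρt

lemma wellApproximated_image_inwardPoint {P : Set (Pt n × ℝ)}
    (hP : ∀ p ∈ P, ‖p.1‖ = 1 ∧ 0 ≤ p.2 ∧ p.2 ≤ 1)
    (hlim : ∀ p ∈ P, p.1 ∈ limitSet (inwardPoint '' P)) :
    WellApproximated (inwardPoint '' P) := by
  refine ⟨1, le_rfl, ?_⟩
  rintro _ ⟨p, hp, rfl⟩
  obtain ⟨hp1, hp0, hp2⟩ := hP p hp
  exact ⟨p.1, hlim p hp, by rw [dist_inwardPoint hp1 hp0, norm_inwardPoint hp1 hp2]; linarith⟩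

lemma accSeries_lt_top_of_layers (hC : ∀ t, ∀ p ∈ C t, ‖p.1‖ = 1 ∧ 0 < p.2 ∧ p.2 ≤ 1)
    {s : ℕ → ℝ} (hmass : ∀ t, ∑ p ∈ C t, ENNReal.ofReal (p.2 ^ s t) ≤ 2⁻¹ ^ t) {σ : ℝ}
    (hσ : ∀ᶠ t in atTop, s t ≤ σ) :
    accSeries (inwardPoint '' ⋃ t, (C t : Set (Pt n × ℝ))) σ < ⊤ := by
  refine (accSeries_image_inwardPoint_le (fun t p hp => ⟨(hC t p hp).1, (hC t p hp).2.2⟩)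
    σ).trans_lt
    (lt_top_iff_ne_top.2 (tsum_ne_top_of_eventually_le
      (fun t => ENNReal.sum_ne_top.2 fun _ _ => ENNReal.ofReal_ne_top)
      ((tsum_geometric_lt_top (r := 2⁻¹)).2 (by norm_num)).ne (hσ.mono fun t ht => ?_)))
  refine (Finset.sum_le_sum fun p hp => ENNReal.ofReal_le_ofReal ?_).trans (hmass t)
  exact Real.rpow_le_rpow_of_exponent_ge (hC t p hp).2.1 (hC t p hp).2.2 ht

end Layers

theorem exists_layers {α : Type*} [MetricSpace α] [MeasurableSpace α] [BorelSpace α]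
    {G : ℕ → Set α} (hG : ∀ t, IsCompact (G t)) {s : ℕ → ℝ} (hs : ∀ t, 0 ≤ s t)
    (hμ : ∀ t, μH[s t] (G t) = 0) :
    ∃ C : ℕ → Finset (α × ℝ),
      (∀ t, ∀ p ∈ C t, p.1 ∈ G t ∧ 0 < p.2 ∧ p.2 ≤ 2⁻¹ ^ t) ∧
      (∀ t, G t ⊆ ⋃ p ∈ C t, closedBall p.1 (16 * p.2)) ∧
      (∀ t, ∑ p ∈ C t, ENNReal.ofReal (p.2 ^ s t) ≤ 2⁻¹ ^ t) ∧
      (⋃ t, (C t : Set (α × ℝ))).Pairwise BallSeparated := by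
  choose! cov hmem hsep hcover hmass using fun t (δ : ℝ) (hδ : 0 < δ) =>
    exists_separated_cover_of_hausdorffMeasure_eq_zero (hG t) (hs t) (hμ t) hδ
      (ε := 2⁻¹ ^ t) (ENNReal.pow_pos (by norm_num) t)
  obtain ⟨δ, hδ, hδle, hδanti, hgap⟩ :=
    exists_scales cov fun t δ hδ p hp => (hmem t δ hδ p hp).2.1
  refine ⟨fun t => cov t (δ t), fun t p hp => ?_, fun t => hcover t _ (hδ t),
    fun t => hmass t _ (hδ t),
    pairwise_ballSeparated_iUnion hδanti (fun t p hp => (hmem t _ (hδ t) p hp).2.2) hgap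
      fun t => hsep t _ (hδ t)⟩
  obtain ⟨hpG, hp0, hpδ⟩ := hmem t _ (hδ t) p hp
  exact ⟨hpG, hp0, hpδ.trans ((hδle t).trans (pow_le_pow_of_le_one (by norm_num) (by norm_num)
    (Nat.le_succ t)))⟩

lemma hausdorffMeasure_eq_zero_of_toReal_dimH_lt {E : Type*} [NormedAddCommGroup E]
    [NormedSpace ℝ E] [FiniteDimensional ℝ E] [MeasurableSpace E] [BorelSpace E]
    {A X : Set E} (hAX : A ⊆ X) {s : ℝ} (hs : (dimH X).toReal < s) : μH[s] A = 0 := by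
  have hA : dimH A < s.toNNReal := by
    refine (dimH_mono hAX).trans_lt ?_
    rw [← ENNReal.ofReal_toReal (Real.dimH_ne_top X)]
    exact (ENNReal.ofReal_lt_ofReal_iff (ENNReal.toReal_nonneg.trans_lt hs)).2 hs
  simpa [Real.coe_toNNReal _ (ENNReal.toReal_nonneg.trans_lt hs).le] using
    hausdorffMeasure_of_dimH_lt hA

/-- Layer `t` covers `F k`, where `(k, m) = unpair t`, at scale `≤ 2⁻ᵗ` with exponent
`dim_H X + 1 / (t + 1)`: each `F k` is covered at arbitrarily small scales, and every exponent
above `dim_H X` is eventually used. -/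
theorem exists_separated_wellApproximated_critExp_le {n : ℕ} {X : Set (Pt n)} {F : ℕ → Set (Pt n)}
    (hFc : ∀ k, IsCompact (F k)) (hFs : ∀ k, F k ⊆ sphere 0 1) (hXF : X = ⋃ k, F k) :
    ∃ E ⊆ ball (0 : Pt n) 1, SeparatedSet E ∧ WellApproximated E ∧ X ⊆ radialLimitSet E ∧
      critExp E ≤ dimH X := by
  let s : ℕ → ℝ := fun t => (dimH X).toReal + 1 / (t + 1)
  have hFX : ∀ k, F k ⊆ X := fun k => hXF ▸ subset_iUnion F k
  obtain ⟨C, hCmem, hCcover, hCmass, hCsep⟩ := exists_layers (fun t => hFc t.unpair.1)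
    (s := s) (fun t => by positivity) fun t => hausdorffMeasure_eq_zero_of_toReal_dimH_lt
      (hFX _) (lt_add_of_pos_right _ (by positivity))
  have hC : ∀ t, ∀ p ∈ C t, ‖p.1‖ = 1 ∧ 0 < p.2 ∧ p.2 ≤ 1 := fun t p hp =>
    ⟨mem_sphere_zero_iff_norm.1 (hFs _ (hCmem t p hp).1), (hCmem t p hp).2.1,
      (hCmem t p hp).2.2.trans (pow_le_one₀ (by norm_num) (by norm_num))⟩
  let P := ⋃ t, (C t : Set (Pt n × ℝ))
  have hP : ∀ p ∈ P, ‖p.1‖ = 1 ∧ 0 < p.2 ∧ p.2 ≤ 1 := fun p hp => by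
    obtain ⟨t, hpt⟩ := mem_iUnion.1 hp
    exact hC t p hpt
  have hball : inwardPoint '' P ⊆ ball 0 1 := image_inwardPoint_subset_ball hP
  have hXrad : X ⊆ radialLimitSet (inwardPoint '' P) := by
    refine hXF ▸ iUnion_subset fun k z hz => radialPoints_subset_radialLimitSet (c := 17)
      (by norm_num) ?_
    exact mem_radialPoints_of_frequently
      (fun t p hp => ⟨(hC t p hp).1, (hC t p hp).2.1.le, (hC t p hp).2.2⟩)
      (tendsto_pow_atTop_nhds_zero_of_lt_one (by norm_num) (by norm_num : (2⁻¹ : ℝ) < 1))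
      (fun t p hp => (hCmem t p hp).2.2) (mem_sphere_zero_iff_norm.1 (hFs k hz))
      ((frequently_atTop_unpair_fst_eq k).mono fun t ht => hCcover t (ht ▸ hz))
  refine ⟨inwardPoint '' P, hball, separatedSet_image_inwardPoint hP hCsep,
    wellApproximated_image_inwardPoint (fun p hp => ⟨(hP p hp).1, (hP p hp).2.1.le, (hP p hp).2.2⟩)
      fun p hp => ?_, hXrad, critExp_le_of_accSeries_lt_top fun σ hσ => ?_⟩
  · obtain ⟨t, hpt⟩ := mem_iUnion.1 hp
    exact radialLimitSet_subset_limitSet hball (hXrad (hFX _ (hCmem t p hpt).1))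
  · have hDσ : (dimH X).toReal < σ := by
      simpa using (ENNReal.toReal_lt_toReal (Real.dimH_ne_top X) ENNReal.coe_ne_top).2 hσ
    refine accSeries_lt_top_of_layers hC hCmass ?_
    filter_upwards [tendsto_one_div_add_atTop_nhds_zero_nat.eventually
      (gt_mem_nhds (sub_pos.2 hDσ))] with t ht
    linarith

theorem dimH_eq_min_critExp_Fsigma_general {n : ℕ}
    (X : Set (Pt n)) (hX : X ⊆ sphere 0 1)
    (hFsigma : ∃ F : ℕ → Set (Pt n), (∀ k, IsClosed (F k)) ∧ X = ⋃ k, F k) :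
    (∃ E : Set (Pt n), E ⊆ ball 0 1 ∧ IsDiscreteSet E ∧ SeparatedSet E ∧
        WellApproximated E ∧ X ⊆ radialLimitSet E ∧ critExp E = dimH X) ∧
      ∀ E : Set (Pt n), E ⊆ ball 0 1 → IsDiscreteSet E → SeparatedSet E →
        WellApproximated E → X ⊆ radialLimitSet E → dimH X ≤ critExp E := by
  obtain ⟨F, hFc, hXF⟩ := hFsigma
  have hlower : ∀ E : Set (Pt n), E ⊆ ball 0 1 → X ⊆ radialLimitSet E → dimH X ≤ critExp E :=
    fun E hE hXE => (dimH_mono hXE).trans (dimH_radialLimitSet_le_critExp hE)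
  obtain ⟨E, hE, hsep, hwell, hXE, hcrit⟩ := exists_separated_wellApproximated_critExp_le
    (F := fun k => F k ∩ sphere 0 1) (fun k => (isCompact_sphere 0 1).inter_left (hFc k))
    (fun k => inter_subset_right) (by rw [← iUnion_inter, ← hXF, inter_eq_left.2 hX])
  exact ⟨⟨E, hE, hsep.isDiscreteSet hE, hsep, hwell, hXE, le_antisymm hcrit (hlower E hE hXE)⟩,
    fun E hE _ _ _ hXE => hlower E hE hXE⟩

/-- **Theorem: for a non-empty `F_σ` set `X ⊆ S^{n-1}`, `dim_H X` is the minimum of `δ(E)` over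
separated, well-approximated discrete `E ⊆ 𝔻ⁿ` with `L_rad(E) ⊇ X`.** -/
theorem dimH_eq_min_critExp_Fsigma {n : ℕ} (hn : 1 ≤ n)
    (X : Set (Pt n)) (hX : X ⊆ sphere 0 1) (hXne : X.Nonempty)
    (hFsigma : ∃ F : ℕ → Set (Pt n), (∀ k, IsClosed (F k)) ∧ X = ⋃ k, F k) :
    (∃ E : Set (Pt n), E ⊆ ball 0 1 ∧ IsDiscreteSet E ∧ SeparatedSet E ∧
        WellApproximated E ∧ X ⊆ radialLimitSet E ∧ critExp E = dimH X) ∧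
      ∀ E : Set (Pt n), E ⊆ ball 0 1 → IsDiscreteSet E → SeparatedSet E →
        WellApproximated E → X ⊆ radialLimitSet E → dimH X ≤ critExp E :=
  dimH_eq_min_critExp_Fsigma_general X hX hFsigma

end
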